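/- Let k be a field and let r, m ≥ 1 be integers. Let f ∈ k[x₁, …, x_r, t] be an irreducible polynomial such that the ideal (f, t) is the unit ideal of k[x₁, …, x_r, t] (equivalently, the hypersurface {f = 0} in 𝔸^{r+1}_k is disjoint from the divisor {t = 0}). Then there exist a nonzero polynomial h ∈ k[x₁, …, x_r] and an integer s₀ ≥ 1 such that for every s ≥ s₀, every field extension K of k, and every g = (g₁, …, g_r) ∈ Kʳ with h(g) ≠ 0, setting f_g := f(x₁ + t^{s(m+1)}·g₁, …, x_r + t^{s(m+1)}·g_r, t), the natural K-algebra homomorphism K[x₁, …, x_r] → K[x₁, …, x_r, t]/(f_g) is injective and finite (the target is a finitely generated module over the source); consequently the projection of the hypersurface {f_g = 0} ⊆ 𝔸^{r+1}_K to 𝔸ʳ_K is a finite surjective morphism. -/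

import Mathlib

/-!
Write `f = ∑ⱼ Fⱼ(x) tʲ` and `N = s(m+1)`. The translate `f_g = ∑ⱼ Fⱼ(x + tᴺg) tʲ` has
`Fⱼ(x + tᴺg)` of `t`-degree at most `N · deg Fⱼ`, with coefficient of `t^(N·deg Fⱼ)` equal to
the top homogeneous form of `Fⱼ` evaluated at `g`. Once `N` exceeds the `t`-degree of `f`, the
weights `j + N · deg Fⱼ` are ordered lexicographically by `(deg Fⱼ, j)`, so a single index `j₀`
attains the largest weight and the leading `t`-coefficient of `f_g` is `h(g)`, with `h` the top
form of `F_{j₀}`. When `h(g) ≠ 0`, `f_g` is, up to the unit `h(g)`, monic in `t` over `K[x]`, so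
`K[x,t]/(f_g)` is finite over `K[x]`; its `t`-degree is positive because an irreducible `f` is
not constant, which makes `K[x] → K[x,t]/(f_g)` injective.
-/

universe u

open MvPolynomial
open scoped Polynomial

namespace Polynomial

lemma coeff_prod_sum_of_natDegree_le {ι A : Type*} [CommSemiring A] (s : Finset ι)
    (p : ι → A[X]) (n : ι → ℕ) (h : ∀ i ∈ s, (p i).natDegree ≤ n i) :
    (∏ i ∈ s, p i).coeff (∑ i ∈ s, n i) = ∏ i ∈ s, (p i).coeff (n i) := by
  induction s using Finset.cons_induction with
  | empty => simp
  | cons a s ha ih =>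
    have hs : ∀ i ∈ s, (p i).natDegree ≤ n i := fun i hi => h i (Finset.mem_cons_of_mem hi)
    rw [Finset.prod_cons, Finset.sum_cons, Finset.prod_cons, coeff_mul_add_eq_of_natDegree_le
      (h a (Finset.mem_cons_self a s)) ((natDegree_prod_le _ _).trans (Finset.sum_le_sum hs)),
      ih hs]

variable {A : Type*} [CommRing A] {P : A[X]}

lemma quotient_mk_comp_C_injective [IsDomain A] (hP : P.degree ≠ 0) :
    Function.Injective ((Ideal.Quotient.mk (Ideal.span {P})).comp C) :=
  AdjoinRoot.of.injective_of_degree_ne_zero hP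

lemma quotient_mk_comp_C_finite (hP : IsUnit P.leadingCoeff) :
    ((Ideal.Quotient.mk (Ideal.span {P})).comp C).Finite := by
  obtain ⟨u, hu⟩ := hP
  have hmonic : (C (↑u⁻¹ : A) * P).Monic :=
    monic_C_mul_of_mul_leadingCoeff_eq_one (by simp [← hu])
  rw [← algebraMap_eq, ← Ideal.Quotient.algebraMap_eq, ← IsScalarTower.algebraMap_eq,
    RingHom.finite_algebraMap, ← Ideal.span_singleton_mul_left_unit (isUnit_C.2 u⁻¹.isUnit)]
  exact hmonic.finite_quotient

end Polynomial

lemma Nat.add_mul_lt_add_mul_of_toLex_lt {N a b c d : ℕ} (hb : b < N)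
    (h : toLex (a, b) < toLex (c, d)) : b + N * a < d + N * c := by
  rcases Prod.Lex.toLex_lt_toLex.1 h with hac | ⟨hac, hbd⟩
  · calc b + N * a < N * (a + 1) := by linarith
      _ ≤ N * c := Nat.mul_le_mul_left N hac
      _ ≤ d + N * c := Nat.le_add_left _ _
  · dsimp only at hac hbd
    subst hac
    omega

namespace MvPolynomial

section TwistedTranslate

variable {σ R S : Type*} [CommSemiring R] [CommSemiring S] [Algebra R S]

noncomputable def twistedTranslate (g : σ → S) (N : ℕ) :
    MvPolynomial σ R →ₐ[R] (MvPolynomial σ S)[X] :=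
  aeval fun i => Polynomial.C (X i) + Polynomial.X ^ N * Polynomial.C (C (g i))

noncomputable def twistedTranslatePoly (g : σ → S) (N : ℕ) :
    (MvPolynomial σ R)[X] →+* (MvPolynomial σ S)[X] :=
  Polynomial.eval₂RingHom (twistedTranslate g N).toRingHom Polynomial.X

variable (g : σ → S) (N : ℕ)

lemma natDegree_twistedTranslate_X_le (i : σ) :
    (twistedTranslate (R := R) g N (X i)).natDegree ≤ N := by
  rw [twistedTranslate, aeval_X]
  exact (Polynomial.natDegree_add_le _ _).trans (max_le (by simp)
    (Polynomial.natDegree_mul_le.trans (by simp [Polynomial.natDegree_X_pow_le])))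

lemma coeff_twistedTranslate_X {N : ℕ} (hN : N ≠ 0) (i : σ) :
    (twistedTranslate (R := R) g N (X i)).coeff N = C (g i) := by
  simp [twistedTranslate, Polynomial.coeff_C, hN]

lemma twistedTranslate_monomial (a : σ →₀ ℕ) (c : R) :
    twistedTranslate g N (monomial a c) = Polynomial.C (C (algebraMap R S c)) *
      ∏ i ∈ a.support, twistedTranslate (R := R) g N (X i) ^ a i := by
  simp only [twistedTranslate, aeval_monomial, aeval_X]
  rfl

lemma natDegree_twistedTranslate_monomial_le (a : σ →₀ ℕ) (c : R) :
    (twistedTranslate g N (monomial a c)).natDegree ≤ N * a.degree := by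
  rw [twistedTranslate_monomial, Finsupp.degree_apply, Finset.mul_sum]
  refine (Polynomial.natDegree_C_mul_le _ _).trans <| (Polynomial.natDegree_prod_le _ _).trans <|
    Finset.sum_le_sum fun i _ => Polynomial.natDegree_pow_le.trans ?_
  rw [mul_comm N]
  exact Nat.mul_le_mul_left _ (natDegree_twistedTranslate_X_le g N i)

lemma coeff_twistedTranslate_monomial {N : ℕ} (hN : N ≠ 0) (a : σ →₀ ℕ) (c : R) :
    (twistedTranslate g N (monomial a c)).coeff (N * a.degree) = C (aeval g (monomial a c)) := by
  have hdeg : ∀ i ∈ a.support, (twistedTranslate (R := R) g N (X i) ^ a i).natDegree ≤ a i * N :=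
    fun i _ => Polynomial.natDegree_pow_le.trans
      (Nat.mul_le_mul_left _ (natDegree_twistedTranslate_X_le g N i))
  rw [twistedTranslate_monomial, Polynomial.coeff_C_mul, Finsupp.degree_apply, Finset.mul_sum]
  simp_rw [mul_comm N]
  rw [Polynomial.coeff_prod_sum_of_natDegree_le _ _ _ hdeg]
  simp only [Polynomial.coeff_pow_of_natDegree_le (natDegree_twistedTranslate_X_le g N _),
    coeff_twistedTranslate_X g hN, aeval_monomial]
  simp [Finsupp.prod, map_prod]

lemma natDegree_twistedTranslate_le (p : MvPolynomial σ R) :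
    (twistedTranslate g N p).natDegree ≤ N * p.totalDegree := by
  conv_lhs => rw [← support_sum_monomial_coeff p]
  rw [map_sum]
  exact Polynomial.natDegree_sum_le_of_forall_le _ _ fun a ha =>
    (natDegree_twistedTranslate_monomial_le g N a _).trans
      (Nat.mul_le_mul_left _ (le_totalDegree ha))

lemma coeff_twistedTranslate {N : ℕ} (hN : N ≠ 0) {p : MvPolynomial σ R} {e : ℕ}
    (he : p.totalDegree ≤ e) :
    (twistedTranslate g N p).coeff (N * e) = C (aeval g (homogeneousComponent e p)) := by
  conv_lhs => rw [← support_sum_monomial_coeff p]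
  rw [homogeneousComponent_apply, map_sum, Polynomial.finsetSum_coeff, map_sum, map_sum,
    Finset.sum_filter]
  refine Finset.sum_congr rfl fun a ha => ?_
  split_ifs with hae
  · rw [← hae, coeff_twistedTranslate_monomial g hN]
  · have hlt : a.degree < e := ((le_totalDegree ha).trans he).lt_of_ne hae
    exact Polynomial.coeff_eq_zero_of_natDegree_lt <|
      (natDegree_twistedTranslate_monomial_le g N a _).trans_lt
        (Nat.mul_lt_mul_of_pos_left hlt (Nat.pos_of_ne_zero hN))

lemma natDegree_twistedTranslate_mul_X_pow_le (p : MvPolynomial σ R) (j : ℕ) :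
    (twistedTranslate g N p * Polynomial.X ^ j).natDegree ≤ j + N * p.totalDegree :=
  Polynomial.natDegree_mul_le.trans <| by
    rw [add_comm j]
    exact add_le_add (natDegree_twistedTranslate_le g N p) (Polynomial.natDegree_X_pow_le j)

lemma twistedTranslatePoly_apply (F : (MvPolynomial σ R)[X]) :
    twistedTranslatePoly g N F =
      ∑ j ∈ F.support, twistedTranslate g N (F.coeff j) * Polynomial.X ^ j := by
  rw [twistedTranslatePoly, Polynomial.coe_eval₂RingHom, Polynomial.eval₂_eq_sum,
    Polynomial.sum_def]
  rfl

lemma optionEquivLeft_aeval_eq_twistedTranslatePoly (f : MvPolynomial (Option σ) R) :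
    optionEquivLeft S σ (aeval (fun o : Option σ =>
        o.elim (X none) fun i => X (some i) + X none ^ N * C (g i)) f) =
      twistedTranslatePoly g N (optionEquivLeft R σ f) := by
  induction f using MvPolynomial.induction_on with
  | C c => simp [twistedTranslatePoly, twistedTranslate]
  | add p q hp hq => simp_all
  | mul_X p o ih => cases o <;> simp_all [twistedTranslatePoly, twistedTranslate]

end TwistedTranslate

section TopIndex

variable {σ R S : Type*} [CommSemiring R] [CommSemiring S] [Algebra R S]

def IsTopIndex (F : (MvPolynomial σ R)[X]) (j₀ : ℕ) : Prop :=
  j₀ ∈ F.support ∧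
    ∀ j ∈ F.support, toLex ((F.coeff j).totalDegree, j) ≤ toLex ((F.coeff j₀).totalDegree, j₀)

lemma exists_isTopIndex {F : (MvPolynomial σ R)[X]} (hF : F ≠ 0) : ∃ j₀, IsTopIndex F j₀ := by
  obtain ⟨j₀, hj₀, hmax⟩ := F.support.exists_max_image
    (fun j => toLex ((F.coeff j).totalDegree, j)) (Polynomial.support_nonempty.2 hF)
  exact ⟨j₀, hj₀, hmax⟩

variable {g : σ → S} {N : ℕ} {F : (MvPolynomial σ R)[X]} {j₀ : ℕ}

lemma natDegree_twistedTranslatePoly_le (hN : F.natDegree < N) (hj₀ : IsTopIndex F j₀) :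
    (twistedTranslatePoly g N F).natDegree ≤ j₀ + N * (F.coeff j₀).totalDegree := by
  rw [twistedTranslatePoly_apply]
  refine Polynomial.natDegree_sum_le_of_forall_le _ _ fun j hj => ?_
  refine (natDegree_twistedTranslate_mul_X_pow_le g N _ j).trans ?_
  rcases (hj₀.2 j hj).lt_or_eq with hlt | heq
  · exact (Nat.add_mul_lt_add_mul_of_toLex_lt
      ((Polynomial.le_natDegree_of_mem_supp j hj).trans_lt hN) hlt).le
  · simp_all

lemma coeff_twistedTranslatePoly (hN : F.natDegree < N) (hj₀ : IsTopIndex F j₀) :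
    (twistedTranslatePoly g N F).coeff (j₀ + N * (F.coeff j₀).totalDegree) =
      C (aeval g (homogeneousComponent (F.coeff j₀).totalDegree (F.coeff j₀))) := by
  rw [twistedTranslatePoly_apply, Polynomial.finsetSum_coeff,
    Finset.sum_eq_single_of_mem j₀ hj₀.1]
  · rw [add_comm, Polynomial.coeff_mul_X_pow, coeff_twistedTranslate g (by omega) le_rfl]
  · intro j hj hne
    have hlt := Nat.add_mul_lt_add_mul_of_toLex_lt (a := (F.coeff j).totalDegree)
      ((Polynomial.le_natDegree_of_mem_supp j hj).trans_lt hN)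
      ((hj₀.2 j hj).lt_of_ne (by simp [hne]))
    exact Polynomial.coeff_eq_zero_of_natDegree_lt
      ((natDegree_twistedTranslate_mul_X_pow_le g N _ j).trans_lt hlt)

lemma natDegree_twistedTranslatePoly_eq (hN : F.natDegree < N) (hj₀ : IsTopIndex F j₀)
    (hg : aeval g (homogeneousComponent (F.coeff j₀).totalDegree (F.coeff j₀)) ≠ 0) :
    (twistedTranslatePoly g N F).natDegree = j₀ + N * (F.coeff j₀).totalDegree :=
  (natDegree_twistedTranslatePoly_le hN hj₀).antisymm <| Polynomial.le_natDegree_of_ne_zero <| by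
    rw [coeff_twistedTranslatePoly hN hj₀]
    exact C_ne_zero.2 hg

lemma leadingCoeff_twistedTranslatePoly (hN : F.natDegree < N) (hj₀ : IsTopIndex F j₀)
    (hg : aeval g (homogeneousComponent (F.coeff j₀).totalDegree (F.coeff j₀)) ≠ 0) :
    (twistedTranslatePoly g N F).leadingCoeff =
      C (aeval g (homogeneousComponent (F.coeff j₀).totalDegree (F.coeff j₀))) := by
  rw [Polynomial.leadingCoeff, natDegree_twistedTranslatePoly_eq hN hj₀ hg,
    coeff_twistedTranslatePoly hN hj₀]

end TopIndex

section Constant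

variable {σ R : Type*} [CommSemiring R]

lemma homogeneousComponent_totalDegree_ne_zero {p : MvPolynomial σ R} (hp : p ≠ 0) :
    homogeneousComponent p.totalDegree p ≠ 0 := by
  obtain ⟨a, ha, hdeg⟩ := Finset.exists_mem_eq_sup p.support (support_nonempty.2 hp)
    fun a => a.degree
  have hdeg' : a.degree = p.totalDegree := hdeg.symm
  intro h
  have hcoeff := coeff_homogeneousComponent p.totalDegree p a
  rw [h, coeff_zero, if_pos hdeg'] at hcoeff
  exact mem_support_iff.1 ha hcoeff.symm

lemma eq_C_C_of_forall_mem_support (F : (MvPolynomial σ R)[X])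
    (h : ∀ j ∈ F.support, j = 0 ∧ (F.coeff j).totalDegree = 0) :
    F = Polynomial.C (C (coeff 0 (F.coeff 0))) := by
  have hnat : F.natDegree = 0 := by
    by_cases hF : F = 0
    · simp [hF]
    · exact (h _ (Polynomial.natDegree_mem_support_of_nonzero hF)).1
  have htot : (F.coeff 0).totalDegree = 0 := by
    by_cases h0 : 0 ∈ F.support
    · exact (h 0 h0).2
    · simp [Polynomial.notMem_support_iff.1 h0]
  rw [← totalDegree_eq_zero_iff_eq_C.1 htot]
  exact Polynomial.eq_C_of_natDegree_eq_zero hnat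

lemma pos_of_isTopIndex {f : MvPolynomial (Option σ) R} (hf : ∀ c, f ≠ C c) {j₀ : ℕ}
    (hj₀ : IsTopIndex (optionEquivLeft R σ f) j₀) :
    0 < j₀ + ((optionEquivLeft R σ f).coeff j₀).totalDegree := by
  by_contra! h0
  refine hf (coeff 0 ((optionEquivLeft R σ f).coeff 0)) ((optionEquivLeft R σ).injective ?_)
  rw [optionEquivLeft_C]
  refine eq_C_C_of_forall_mem_support _ fun j hj => ?_
  have := hj₀.2 j hj
  simp only [Prod.Lex.toLex_le_toLex] at this
  omega

end Constant

lemma optionEquivLeft_rename_some {σ R : Type*} [CommSemiring R] (p : MvPolynomial σ R) :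
    optionEquivLeft R σ (rename some p) = Polynomial.C p := by
  induction p using MvPolynomial.induction_on <;> simp_all

lemma exists_quotient_mk_comp_rename_some_eq {σ R : Type*} [CommRing R]
    {q : MvPolynomial (Option σ) R} {P : (MvPolynomial σ R)[X]}
    (hqP : optionEquivLeft R σ q = P) :
    ∃ θ : (MvPolynomial σ R)[X] ⧸ Ideal.span {P} ≃+* MvPolynomial (Option σ) R ⧸ Ideal.span {q},
      (Ideal.Quotient.mk _).comp (rename some).toRingHom =
        θ.toRingHom.comp ((Ideal.Quotient.mk _).comp Polynomial.C) := by
  subst hqP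
  refine ⟨Ideal.quotientEquiv _ _ (optionEquivLeft R σ).toRingEquiv.symm
    (by simp [Ideal.map_span]), RingHom.ext fun p => ?_⟩
  simp [← optionEquivLeft_rename_some]

end MvPolynomial

theorem statement_13_general {k : Type u} [Field k] (r m : ℕ)
    (f : MvPolynomial (Option (Fin r)) k) (hirr : Irreducible f) :
    ∃ (h : MvPolynomial (Fin r) k) (s₀ : ℕ), h ≠ 0 ∧ 1 ≤ s₀ ∧
      ∀ s : ℕ, s₀ ≤ s →
        ∀ (K : Type u) [Field K] [Algebra k K], ∀ g : Fin r → K,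
          MvPolynomial.aeval g h ≠ 0 →
            Function.Injective
              ((Ideal.Quotient.mk (Ideal.span
                  ({MvPolynomial.aeval
                      (fun o : Option (Fin r) =>
                        o.elim (MvPolynomial.X none)
                          (fun i => MvPolynomial.X (some i) +
                            MvPolynomial.X none ^ (s * (m + 1)) * MvPolynomial.C (g i)))
                      f} : Set (MvPolynomial (Option (Fin r)) K)))).comp
                (MvPolynomial.rename (some : Fin r → Option (Fin r))).toRingHom) ∧
            RingHom.Finite
              ((Ideal.Quotient.mk (Ideal.span
                  ({MvPolynomial.aeval
                      (fun o : Option (Fin r) =>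
                        o.elim (MvPolynomial.X none)
                          (fun i => MvPolynomial.X (some i) +
                            MvPolynomial.X none ^ (s * (m + 1)) * MvPolynomial.C (g i)))
                      f} : Set (MvPolynomial (Option (Fin r)) K)))).comp
                (MvPolynomial.rename (some : Fin r → Option (Fin r))).toRingHom) := by
  set F := optionEquivLeft k (Fin r) f
  have hF : F ≠ 0 := (map_ne_zero_iff _ (optionEquivLeft k (Fin r)).injective).2 hirr.ne_zero
  obtain ⟨j₀, hj₀⟩ := exists_isTopIndex hF
  have hnonconst : ∀ c, f ≠ C c := by
    rintro c rfl
    exact hirr.not_isUnit ((Ne.isUnit fun hc => hirr.ne_zero (by rw [hc, C_0])).map C)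
  have hpos : 0 < j₀ + (F.coeff j₀).totalDegree := pos_of_isTopIndex hnonconst hj₀
  refine ⟨homogeneousComponent _ (F.coeff j₀), F.natDegree + 1,
    homogeneousComponent_totalDegree_ne_zero (Polynomial.mem_support_iff.1 hj₀.1), le_add_self,
    fun s hs K _ _ g hg => ?_⟩
  have hN : F.natDegree < s * (m + 1) := by nlinarith
  obtain ⟨θ, hθ⟩ := exists_quotient_mk_comp_rename_some_eq
    (optionEquivLeft_aeval_eq_twistedTranslatePoly g _ f)
  rw [hθ]
  refine ⟨θ.injective.comp (Polynomial.quotient_mk_comp_C_injective ?_),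
    (RingHom.Finite.of_surjective _ θ.surjective).comp (Polynomial.quotient_mk_comp_C_finite ?_)⟩
  · refine (Polynomial.natDegree_pos_iff_degree_pos.1 ?_).ne'
    rw [natDegree_twistedTranslatePoly_eq hN hj₀ hg]
    have := Nat.le_mul_of_pos_left (F.coeff j₀).totalDegree (hN.trans_le' (Nat.zero_le _))
    omega
  · rw [leadingCoeff_twistedTranslatePoly hN hj₀ hg]
    exact (isUnit_iff_ne_zero.2 hg).map C

theorem statement_13 {k : Type u} [Field k] (r m : ℕ) (hr : 1 ≤ r) (hm : 1 ≤ m)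
    (f : MvPolynomial (Option (Fin r)) k) (hirr : Irreducible f)
    (hft : Ideal.span ({f, MvPolynomial.X none} : Set (MvPolynomial (Option (Fin r)) k)) = ⊤) :
    ∃ (h : MvPolynomial (Fin r) k) (s₀ : ℕ), h ≠ 0 ∧ 1 ≤ s₀ ∧
      ∀ s : ℕ, s₀ ≤ s →
        ∀ (K : Type u) [Field K] [Algebra k K], ∀ g : Fin r → K,
          MvPolynomial.aeval g h ≠ 0 →
            Function.Injective
              ((Ideal.Quotient.mk (Ideal.span
                  ({MvPolynomial.aeval
                      (fun o : Option (Fin r) =>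
                        o.elim (MvPolynomial.X none)
                          (fun i => MvPolynomial.X (some i) +
                            MvPolynomial.X none ^ (s * (m + 1)) * MvPolynomial.C (g i)))
                      f} : Set (MvPolynomial (Option (Fin r)) K)))).comp
                (MvPolynomial.rename (some : Fin r → Option (Fin r))).toRingHom) ∧
            RingHom.Finite
              ((Ideal.Quotient.mk (Ideal.span
                  ({MvPolynomial.aeval
                      (fun o : Option (Fin r) =>
                        o.elim (MvPolynomial.X none)
                          (fun i => MvPolynomial.X (some i) +
                            MvPolynomial.X none ^ (s * (m + 1)) * MvPolynomial.C (g i)))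
                      f} : Set (MvPolynomial (Option (Fin r)) K)))).comp
                (MvPolynomial.rename (some : Fin r → Option (Fin r))).toRingHom) :=
  statement_13_general r m f hirr
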